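/- Let A be a Hopf algebra over ℂ whose antipode S is bijective, and Λ ∈ A a two-sided integral. Let V be a nonzero finite-dimensional simple A-module and M : V → V a ℂ-linear map. Then the map X_M : V → V defined by X_M(v) := Σ S(Λ₍₁₎)•M(Λ₍₂₎•v) is the scalar operator (Tr(X_M)/dim V) · id_V. -/

import Mathlib

open TensorProduct

/-- The action of an element `a : A` of a `k`-algebra `A` on an `A`-module `V`
(compatible with the `k`-structure), as a `k`-linear endomorphism of `V`. -/
noncomputable def lsmulA (k A V : Type*) [CommSemiring k] [Semiring A] [Algebra k A]
    [AddCommMonoid V] [Module k V] [Module A V] [IsScalarTower k A V] (a : A) :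
    V →ₗ[k] V where
  toFun v := a • v
  map_add' := smul_add a
  map_smul' c v := by
    simp only [RingHom.id_apply, ← algebraMap_smul A c v, ← mul_smul, ← Algebra.commutes c a]
    rw [mul_smul, algebraMap_smul]

@[simp] lemma lsmulA_apply (k A V : Type*) [CommSemiring k] [Semiring A] [Algebra k A]
    [AddCommMonoid V] [Module k V] [Module A V] [IsScalarTower k A V] (a : A) (v : V) :
    lsmulA k A V a v = a • v := rfl

lemma lsmulA_smul_comm (k A V : Type*) [CommSemiring k] [Semiring A] [Algebra k A]
    [AddCommMonoid V] [Module k V] [Module A V] [IsScalarTower k A V] (a : A) (c : k) (v : V) :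
    a • (c • v) = c • (a • v) := (lsmulA k A V a).map_smul c v

/-- Given an element `t = Σ aᵢ ⊗ bᵢ` of `A ⊗[k] A`, the `k`-linear endomorphism of
`Hom_k(V, W)` sending `f` to `v ↦ Σ aᵢ • f (bᵢ • v)` (Sweedler-style sandwich action). -/
noncomputable def hopfSandwich (k A V W : Type*) [CommSemiring k] [Semiring A] [Algebra k A]
    [AddCommMonoid V] [Module k V] [Module A V] [IsScalarTower k A V]
    [AddCommMonoid W] [Module k W] [Module A W] [IsScalarTower k A W]
    (t : TensorProduct k A A) : (V →ₗ[k] W) →ₗ[k] (V →ₗ[k] W) :=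
  TensorProduct.lift
    (LinearMap.mk₂ k
      (fun a b => (LinearMap.llcomp k V W W (lsmulA k A W a)).comp
          (LinearMap.lcomp k W (lsmulA k A V b)))
      (fun a a' b => by
        ext f v
        simp [add_smul])
      (fun c a b => by
        ext f v
        simp [smul_assoc])
      (fun a b b' => by
        ext f v
        simp [add_smul])
      (fun c a b => by
        ext f v
        simp [smul_assoc, map_smul, lsmulA_smul_comm])) t

@[simp] lemma hopfSandwich_tmul (k A V W : Type*) [CommSemiring k] [Semiring A] [Algebra k A]
    [AddCommMonoid V] [Module k V] [Module A V] [IsScalarTower k A V]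
    [AddCommMonoid W] [Module k W] [Module A W] [IsScalarTower k A W]
    (a b : A) (f : V →ₗ[k] W) (v : V) :
    hopfSandwich k A V W (a ⊗ₜ[k] b) f v = a • f (b • v) := rfl


open Coalgebra HopfAlgebra

section Prep
variable {R A : Type*} [CommSemiring R] [Semiring A] [Bialgebra R A]

/-- product of two representations is a representation of the product -/
noncomputable def reprMul {ι κ : Type*} {a b : A} (ra : Coalgebra.Repr R a ι) (rb : Coalgebra.Repr R b κ) :
    Coalgebra.Repr R (a * b) (ι × κ) where
  index := ra.index ×ˢ rb.index
  left p := ra.left p.1 * rb.left p.2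
  right p := ra.right p.1 * rb.right p.2
  eq := by
    rw [Finset.sum_product]
    rw [Bialgebra.comul_mul, ← ra.eq, ← rb.eq, Finset.sum_mul_sum]
    simp [Algebra.TensorProduct.tmul_mul_tmul]

lemma repr_sum_counit_right {ι : Type*} {a : A} (ra : Coalgebra.Repr R a ι) :
    ∑ i ∈ ra.index, counit (R := R) (ra.right i) • ra.left i = a := by
  calc ∑ i ∈ ra.index, counit (R := R) (ra.right i) • ra.left i
      = TensorProduct.rid R A (∑ i ∈ ra.index, ra.left i ⊗ₜ counit (R := R) (ra.right i)) := by
        rw [map_sum]; simp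
    _ = a := by rw [Coalgebra.sum_tmul_counit_eq]; simp

lemma repr_sum_counit_left {ι : Type*} {a : A} (ra : Coalgebra.Repr R a ι) :
    ∑ i ∈ ra.index, counit (R := R) (ra.left i) • ra.right i = a := by
  calc ∑ i ∈ ra.index, counit (R := R) (ra.left i) • ra.right i
      = TensorProduct.lid R A (∑ i ∈ ra.index, counit (R := R) (ra.left i) ⊗ₜ ra.right i) := by
        rw [map_sum]; simp
    _ = a := by rw [Coalgebra.sum_counit_tmul_eq]; simp

end Prep

section Hopf
variable {R A : Type*} [CommSemiring R] [Semiring A] [HopfAlgebra R A]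

lemma sum_antipode_mul_mul {ι κ : Type*} {x y : A} (rx : Coalgebra.Repr R x ι) (ry : Coalgebra.Repr R y κ) :
    ∑ i ∈ rx.index, ∑ j ∈ ry.index,
      antipode (R := R) (rx.left i * ry.left j) * (rx.right i * ry.right j)
      = (counit (R := R) x * counit (R := R) y) • (1 : A) := by
  have h := sum_antipode_mul_eq_smul (R := R) (reprMul rx ry)
  simp only [reprMul] at h
  rw [Finset.sum_product] at h
  simpa [Bialgebra.counit_mul] using h

lemma sum_mul_mul_antipode_antipode {ι κ : Type*} {x y : A} (rx : Coalgebra.Repr R x ι) (ry : Coalgebra.Repr R y κ) :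
    ∑ i ∈ rx.index, ∑ j ∈ ry.index,
      (rx.left i * ry.left j) *
        (antipode (R := R) (ry.right j) * antipode (R := R) (rx.right i))
      = (counit (R := R) x * counit (R := R) y) • (1 : A) := by
  have key : ∀ i ∈ rx.index,
      ∑ j ∈ ry.index, (rx.left i * ry.left j) *
        (antipode (R := R) (ry.right j) * antipode (R := R) (rx.right i))
      = counit (R := R) y • (rx.left i * antipode (R := R) (rx.right i)) := by
    intro i _
    have hterm : ∀ j, (rx.left i * ry.left j) *
        (antipode (R := R) (ry.right j) * antipode (R := R) (rx.right i))
        = rx.left i * ((ry.left j * antipode (R := R) (ry.right j)) * antipode (R := R) (rx.right i)) := by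
      intro j; noncomm_ring
    rw [Finset.sum_congr rfl (fun j _ => hterm j), ← Finset.mul_sum, ← Finset.sum_mul,
      sum_mul_antipode_eq_smul ry, smul_mul_assoc, one_mul, mul_smul_comm]
  rw [Finset.sum_congr rfl key, ← Finset.smul_sum, sum_mul_antipode_eq_smul rx,
    smul_smul, mul_comm]

end Hopf

lemma sum4_swap {ι1 ι3 M : Type*} {ι2 : ι1 → Type*} {ι4 : ι3 → Type*} [AddCommMonoid M]
    (s1 : Finset ι1) (s2 : ∀ i, Finset (ι2 i)) (s3 : Finset ι3) (s4 : ∀ j, Finset (ι4 j))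
    (f : (i : ι1) → ι2 i → (j : ι3) → ι4 j → M) :
    ∑ j ∈ s3, ∑ l ∈ s4 j, ∑ i ∈ s1, ∑ k ∈ s2 i, f i k j l
    = ∑ i ∈ s1, ∑ k ∈ s2 i, ∑ j ∈ s3, ∑ l ∈ s4 j, f i k j l := by
  have h1 : ∀ j l, (∑ i ∈ s1, ∑ k ∈ s2 i, f i k j l)
      = ∑ q ∈ s1.sigma s2, f q.1 q.2 j l := fun j l =>
    (Finset.sum_sigma s1 s2 fun q => f q.1 q.2 j l).symm
  simp_rw [h1]
  rw [← Finset.sum_sigma s3 s4 (fun p => ∑ q ∈ s1.sigma s2, f q.1 q.2 p.1 p.2),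
    Finset.sum_comm]
  simp_rw [Finset.sum_sigma]

section Hopf2
variable (R A : Type*) [CommSemiring R] [Semiring A] [HopfAlgebra R A]

noncomputable def phiMap : (A ⊗[R] (A ⊗[R] A)) ⊗[R] (A ⊗[R] (A ⊗[R] A)) →ₗ[R] A :=
  (LinearMap.mul' R A) ∘ₗ
    (TensorProduct.map
      ((antipode (R := R)) ∘ₗ LinearMap.mul' R A)
      ((LinearMap.mul' R A) ∘ₗ
        TensorProduct.map (LinearMap.mul' R A)
          ((LinearMap.mul' R A) ∘ₗ
            TensorProduct.map (antipode (R := R)) (antipode (R := R)) ∘ₗ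
            (TensorProduct.comm R A A).toLinearMap) ∘ₗ
        (TensorProduct.tensorTensorTensorComm R A A A A).toLinearMap)) ∘ₗ
    (TensorProduct.tensorTensorTensorComm R A (A ⊗[R] A) A (A ⊗[R] A)).toLinearMap

variable {R A} in
@[simp] lemma phiMap_tmul (x₁ x₂ x₃ y₁ y₂ y₃ : A) :
    phiMap R A ((x₁ ⊗ₜ (x₂ ⊗ₜ x₃)) ⊗ₜ (y₁ ⊗ₜ (y₂ ⊗ₜ y₃))) =
      antipode (R := R) (x₁ * y₁) *
        (x₂ * y₂ * (antipode (R := R) y₃ * antipode (R := R) x₃)) := by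
  simp [phiMap]

variable {R A} in
theorem antipode_antimul (a b : A) :
    antipode (R := R) (a * b) = antipode (R := R) b * antipode (R := R) a := by
  let ra := Coalgebra.Repr.arbitrary R a
  let rb := Coalgebra.Repr.arbitrary R b
  let ra1 : ∀ i : A × A, Coalgebra.Repr R (ra.left i) (A × A) := fun i => Coalgebra.Repr.arbitrary R _
  let ra2 : ∀ i : A × A, Coalgebra.Repr R (ra.right i) (A × A) := fun i => Coalgebra.Repr.arbitrary R _
  let rb1 : ∀ j : A × A, Coalgebra.Repr R (rb.left j) (A × A) := fun j => Coalgebra.Repr.arbitrary R _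
  let rb2 : ∀ j : A × A, Coalgebra.Repr R (rb.right j) (A × A) := fun j => Coalgebra.Repr.arbitrary R _
  have hA := Coalgebra.sum_tmul_tmul_eq ra ra1 ra2
  have hB := Coalgebra.sum_tmul_tmul_eq rb rb1 rb2
  have hmain := congrArg₂ (fun u w => phiMap R A (u ⊗ₜ[R] w)) hA hB
  simp only [TensorProduct.sum_tmul, TensorProduct.tmul_sum, map_sum, phiMap_tmul] at hmain
  rw [sum4_swap ra.index (fun i => (ra1 i).index) rb.index (fun j => (rb1 j).index)
      (fun i k j l =>
        antipode (R := R) ((ra1 i).left k * (rb1 j).left l) *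
          ((ra1 i).right k * (rb1 j).right l *
            (antipode (R := R) (rb.right j) * antipode (R := R) (ra.right i)))),
    sum4_swap ra.index (fun i => (ra2 i).index) rb.index (fun j => (rb2 j).index)
      (fun i k j l =>
        antipode (R := R) (ra.left i * rb.left j) *
          ((ra2 i).left k * (rb2 j).left l *
            (antipode (R := R) ((rb2 j).right l) * antipode (R := R) ((ra2 i).right k))))] at hmain
  have hL : ∑ i ∈ ra.index, ∑ k ∈ (ra1 i).index, ∑ j ∈ rb.index, ∑ l ∈ (rb1 j).index,
      antipode (R := R) ((ra1 i).left k * (rb1 j).left l) *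
        ((ra1 i).right k * (rb1 j).right l *
          (antipode (R := R) (rb.right j) * antipode (R := R) (ra.right i)))
      = antipode (R := R) b * antipode (R := R) a := by
    calc
      _ = ∑ i ∈ ra.index, ∑ j ∈ rb.index, ∑ k ∈ (ra1 i).index, ∑ l ∈ (rb1 j).index,
          (antipode (R := R) ((ra1 i).left k * (rb1 j).left l) *
            ((ra1 i).right k * (rb1 j).right l)) *
          (antipode (R := R) (rb.right j) * antipode (R := R) (ra.right i)) := by
        refine Finset.sum_congr rfl fun i _ => ?_
        rw [Finset.sum_comm]
        exact Finset.sum_congr rfl fun j _ => Finset.sum_congr rfl fun k _ =>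
          Finset.sum_congr rfl fun l _ => (mul_assoc _ _ _).symm
      _ = ∑ i ∈ ra.index, ∑ j ∈ rb.index,
          (counit (R := R) (ra.left i) * counit (R := R) (rb.left j)) •
            (antipode (R := R) (rb.right j) * antipode (R := R) (ra.right i)) := by
        refine Finset.sum_congr rfl fun i _ => Finset.sum_congr rfl fun j _ => ?_
        rw [Finset.sum_congr rfl (fun k _ => (Finset.sum_mul _ _ _).symm),
          ← Finset.sum_mul,
          sum_antipode_mul_mul (ra1 i) (rb1 j), smul_mul_assoc, one_mul]
      _ = ∑ i ∈ ra.index, counit (R := R) (ra.left i) •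
            ((∑ j ∈ rb.index, counit (R := R) (rb.left j) • antipode (R := R) (rb.right j)) *
              antipode (R := R) (ra.right i)) := by
        refine Finset.sum_congr rfl fun i _ => ?_
        rw [Finset.sum_congr rfl (fun j _ => by rw [mul_smul, ← smul_mul_assoc]),
          ← Finset.smul_sum, ← Finset.sum_mul]
      _ = antipode (R := R) b * antipode (R := R) a := by
        have h1 : (∑ j ∈ rb.index, counit (R := R) (rb.left j) • antipode (R := R) (rb.right j))
            = antipode (R := R) b := by
          have := congrArg (antipode (R := R)) (repr_sum_counit_left rb)
          simpa [map_sum] using this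
        rw [h1]
        have h2 : (∑ i ∈ ra.index, counit (R := R) (ra.left i) • antipode (R := R) (ra.right i))
            = antipode (R := R) a := by
          have := congrArg (antipode (R := R)) (repr_sum_counit_left ra)
          simpa [map_sum] using this
        rw [← h2, Finset.mul_sum]
        exact Finset.sum_congr rfl fun i _ => by rw [mul_smul_comm]
  have hR : ∑ i ∈ ra.index, ∑ k ∈ (ra2 i).index, ∑ j ∈ rb.index, ∑ l ∈ (rb2 j).index,
      antipode (R := R) (ra.left i * rb.left j) *
        ((ra2 i).left k * (rb2 j).left l *
          (antipode (R := R) ((rb2 j).right l) * antipode (R := R) ((ra2 i).right k)))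
      = antipode (R := R) (a * b) := by
    calc
      _ = ∑ i ∈ ra.index, ∑ j ∈ rb.index,
          antipode (R := R) (ra.left i * rb.left j) *
            ∑ k ∈ (ra2 i).index, ∑ l ∈ (rb2 j).index,
              ((ra2 i).left k * (rb2 j).left l *
                (antipode (R := R) ((rb2 j).right l) * antipode (R := R) ((ra2 i).right k))) := by
        refine Finset.sum_congr rfl fun i _ => ?_
        rw [Finset.sum_comm]
        refine Finset.sum_congr rfl fun j _ => ?_
        rw [Finset.mul_sum]
        exact Finset.sum_congr rfl fun k _ => (Finset.mul_sum _ _ _).symm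
      _ = ∑ i ∈ ra.index, ∑ j ∈ rb.index,
          (counit (R := R) (ra.right i) * counit (R := R) (rb.right j)) •
            antipode (R := R) (ra.left i * rb.left j) := by
        refine Finset.sum_congr rfl fun i _ => Finset.sum_congr rfl fun j _ => ?_
        rw [sum_mul_mul_antipode_antipode (ra2 i) (rb2 j), mul_smul_comm, mul_one]
      _ = ∑ i ∈ ra.index, counit (R := R) (ra.right i) •
            antipode (R := R) (ra.left i * b) := by
        refine Finset.sum_congr rfl fun i _ => ?_
        have h1 : ∑ j ∈ rb.index, counit (R := R) (rb.right j) •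
              antipode (R := R) (ra.left i * rb.left j)
            = antipode (R := R) (ra.left i * b) := by
          have := congrArg ((antipode (R := R)) ∘ₗ (LinearMap.mulLeft R (ra.left i)))
            (repr_sum_counit_right rb)
          simpa [map_sum] using this
        rw [Finset.sum_congr rfl (fun j _ => mul_smul _ _ _), ← Finset.smul_sum, h1]
      _ = antipode (R := R) (a * b) := by
        have := congrArg ((antipode (R := R)) ∘ₗ (LinearMap.mulRight R b))
          (repr_sum_counit_right ra)
        simpa [map_sum] using this
  rw [hL, hR] at hmain
  exact hmain.symm

end Hopf2

section Integral
variable {R A : Type*} [CommSemiring R] [Semiring A] [HopfAlgebra R A]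


lemma integral_comul_right (Λ : A)
    (hT : ∀ y : A, comul (R := R) Λ * comul (R := R) y = counit (R := R) y • comul (R := R) Λ)
    (x : A) :
    comul (R := R) Λ * (x ⊗ₜ[R] (1 : A)) =
      comul (R := R) Λ * ((1 : A) ⊗ₜ[R] antipode (R := R) x) := by
  let rx := Coalgebra.Repr.arbitrary R x
  let rx1 : ∀ i : A × A, Coalgebra.Repr R (rx.left i) (A × A) := fun i => Coalgebra.Repr.arbitrary R _
  let rx2 : ∀ i : A × A, Coalgebra.Repr R (rx.right i) (A × A) := fun i => Coalgebra.Repr.arbitrary R _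
  have hX := Coalgebra.sum_tmul_tmul_eq rx rx1 rx2
  set T := comul (R := R) Λ with hTdef
  let Θ : A ⊗[R] (A ⊗[R] A) →ₗ[R] A ⊗[R] A :=
    (LinearMap.mulLeft R T) ∘ₗ
      (TensorProduct.map LinearMap.id ((LinearMap.mul' R A) ∘ₗ (antipode (R := R)).lTensor A))
  have hΘ : ∀ p q r : A, Θ (p ⊗ₜ (q ⊗ₜ r)) = T * (p ⊗ₜ (q * antipode (R := R) r)) := by
    intro p q r; simp [Θ]
  have hmain := congrArg Θ hX
  simp only [map_sum, hΘ] at hmain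
  have h0 : ∀ p q s : A, T * (p ⊗ₜ[R] (q * s)) = (T * (p ⊗ₜ[R] q)) * ((1:A) ⊗ₜ[R] s) := by
    intro p q s
    rw [mul_assoc, Algebra.TensorProduct.tmul_mul_tmul, mul_one]
  have hLHS : ∑ i ∈ rx.index, ∑ k ∈ (rx1 i).index,
      T * ((rx1 i).left k ⊗ₜ[R] ((rx1 i).right k * antipode (R := R) (rx.right i)))
      = T * ((1:A) ⊗ₜ[R] antipode (R := R) x) := by
    calc
      _ = ∑ i ∈ rx.index, counit (R := R) (rx.left i) •
            (T * ((1:A) ⊗ₜ[R] antipode (R := R) (rx.right i))) := by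
        refine Finset.sum_congr rfl fun i _ => ?_
        rw [Finset.sum_congr rfl (fun k _ => h0 _ _ _), ← Finset.sum_mul,
          ← Finset.mul_sum, (rx1 i).eq, hT, smul_mul_assoc]
      _ = T * ((1:A) ⊗ₜ[R] antipode (R := R) x) := by
        have := congrArg ((LinearMap.mulLeft R T) ∘ₗ
          (TensorProduct.mk R A A (1:A)) ∘ₗ (antipode (R := R)))
          (repr_sum_counit_left rx)
        simpa [map_sum] using this
  have hRHS : ∑ i ∈ rx.index, ∑ k ∈ (rx2 i).index,
      T * (rx.left i ⊗ₜ[R] ((rx2 i).left k * antipode (R := R) ((rx2 i).right k)))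
      = T * (x ⊗ₜ[R] (1:A)) := by
    calc
      _ = ∑ i ∈ rx.index, counit (R := R) (rx.right i) • (T * (rx.left i ⊗ₜ[R] (1:A))) := by
        refine Finset.sum_congr rfl fun i _ => ?_
        rw [← Finset.mul_sum, ← TensorProduct.tmul_sum, sum_mul_antipode_eq_smul (rx2 i),
          TensorProduct.tmul_smul, mul_smul_comm]
      _ = T * (x ⊗ₜ[R] (1:A)) := by
        have := congrArg ((LinearMap.mulLeft R T) ∘ₗ
          ((TensorProduct.mk R A A).flip (1:A))) (repr_sum_counit_right rx)
        simpa [map_sum] using this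
  rw [hLHS, hRHS] at hmain
  exact hmain.symm

end Integral

section Key3
variable {R A : Type*} [CommSemiring R] [Semiring A] [HopfAlgebra R A]

lemma integral_sandwich_comm (Λ : A)
    (hT : ∀ y : A, comul (R := R) Λ * comul (R := R) y = counit (R := R) y • comul (R := R) Λ)
    (hSsurj : Function.Surjective (antipode (R := R) (A := A))) (a : A) :
    (a ⊗ₜ[R] (1 : A)) *
        (TensorProduct.map (antipode (R := R)) LinearMap.id (comul (R := R) Λ)) =
      (TensorProduct.map (antipode (R := R)) LinearMap.id (comul (R := R) Λ)) *
        ((1 : A) ⊗ₜ[R] a) := by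
  obtain ⟨x, rfl⟩ := hSsurj a
  have h2 := integral_comul_right Λ hT x
  have e1 : ∀ (u : A ⊗[R] A) (c : A),
      TensorProduct.map (antipode (R := R)) LinearMap.id (u * ((1:A) ⊗ₜ[R] c))
        = TensorProduct.map (antipode (R := R)) LinearMap.id u * ((1:A) ⊗ₜ[R] c) := by
    intro u c
    induction u using TensorProduct.induction_on with
    | zero => simp
    | tmul p q => simp [Algebra.TensorProduct.tmul_mul_tmul]
    | add u v hu hv => rw [add_mul, map_add, hu, hv, map_add, add_mul]
  have e2 : ∀ (u : A ⊗[R] A) (y : A),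
      TensorProduct.map (antipode (R := R)) LinearMap.id (u * (y ⊗ₜ[R] (1:A)))
        = (antipode (R := R) y ⊗ₜ[R] (1:A)) *
            TensorProduct.map (antipode (R := R)) LinearMap.id u := by
    intro u y
    induction u using TensorProduct.induction_on with
    | zero => simp
    | tmul p q => simp [Algebra.TensorProduct.tmul_mul_tmul, antipode_antimul]
    | add u v hu hv => rw [add_mul, map_add, hu, hv, map_add, mul_add]
  rw [← e2 _ x, h2, e1]

end Key3
/-- Let `Λ` be a two-sided integral in a Hopf algebra `A` over `ℂ` with
bijective antipode, `V` a nonzero finite-dimensional simple `A`-module and `M : V → V` a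
`ℂ`-linear map.  Then `X_M : v ↦ Σ S(Λ₍₁₎) • M (Λ₍₂₎ • v)` equals `(Tr X_M / dim V) • id`. -/
theorem sandwich_integral_simple_eq_smul_id (A V : Type*) [Ring A] [HopfAlgebra ℂ A]
    (hS : Function.Bijective (HopfAlgebra.antipode (R := ℂ) (A := A)))
    [AddCommGroup V] [Module ℂ V] [Module A V] [IsScalarTower ℂ A V]
    [FiniteDimensional ℂ V] [IsSimpleModule A V]
    (Λ : A)
    (hL : ∀ x : A, x * Λ = Coalgebra.counit (R := ℂ) x • Λ)
    (hR : ∀ x : A, Λ * x = Coalgebra.counit (R := ℂ) x • Λ)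
    (M : V →ₗ[ℂ] V) :
    hopfSandwich ℂ A V V
      (TensorProduct.map (HopfAlgebra.antipode (R := ℂ)) LinearMap.id
        (Coalgebra.comul (R := ℂ) Λ)) M =
      (LinearMap.trace ℂ V
          (hopfSandwich ℂ A V V
            (TensorProduct.map (HopfAlgebra.antipode (R := ℂ)) LinearMap.id
              (Coalgebra.comul (R := ℂ) Λ)) M) / (Module.finrank ℂ V : ℂ)) •
        LinearMap.id := by
  classical
  have hT : ∀ y : A, Coalgebra.comul (R := ℂ) Λ * Coalgebra.comul (R := ℂ) y
      = Coalgebra.counit (R := ℂ) y • Coalgebra.comul (R := ℂ) Λ := by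
    intro y
    rw [← Bialgebra.comul_mul, hR y, map_smul]
  set T' : A ⊗[ℂ] A := TensorProduct.map (HopfAlgebra.antipode (R := ℂ)) LinearMap.id
    (Coalgebra.comul (R := ℂ) Λ) with hT'def
  set X : V →ₗ[ℂ] V := hopfSandwich ℂ A V V T' M with hXdef
  have hadd : ∀ u w : A ⊗[ℂ] A,
      hopfSandwich ℂ A V V (u + w) = hopfSandwich ℂ A V V u + hopfSandwich ℂ A V V w := by
    intro u w; unfold hopfSandwich; exact map_add _ _ _
  have hzero : hopfSandwich ℂ A V V (0 : A ⊗[ℂ] A) = 0 := by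
    unfold hopfSandwich; exact map_zero _
  have sand_left : ∀ (t : A ⊗[ℂ] A) (a : A) (v : V),
      hopfSandwich ℂ A V V ((a ⊗ₜ[ℂ] (1:A)) * t) M v = a • hopfSandwich ℂ A V V t M v := by
    intro t a v
    induction t using TensorProduct.induction_on with
    | zero => rw [mul_zero, hzero]; simp
    | tmul p q =>
      rw [Algebra.TensorProduct.tmul_mul_tmul, one_mul, hopfSandwich_tmul, hopfSandwich_tmul,
        mul_smul]
    | add u w hu hw =>
      rw [mul_add, hadd, hadd]
      simp only [LinearMap.add_apply]
      rw [hu, hw, smul_add]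
  have sand_right : ∀ (t : A ⊗[ℂ] A) (a : A) (v : V),
      hopfSandwich ℂ A V V (t * ((1:A) ⊗ₜ[ℂ] a)) M v = hopfSandwich ℂ A V V t M (a • v) := by
    intro t a v
    induction t using TensorProduct.induction_on with
    | zero => rw [zero_mul, hzero]; simp
    | tmul p q =>
      rw [Algebra.TensorProduct.tmul_mul_tmul, mul_one, hopfSandwich_tmul, hopfSandwich_tmul,
        mul_smul]
    | add u w hu hw =>
      rw [add_mul, hadd, hadd]
      simp only [LinearMap.add_apply]
      rw [hu, hw]
  have hequiv : ∀ (a : A) (v : V), X (a • v) = a • X v := by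
    intro a v
    have h3 := integral_sandwich_comm (R := ℂ) Λ hT hS.surjective a
    calc X (a • v) = hopfSandwich ℂ A V V (T' * ((1:A) ⊗ₜ[ℂ] a)) M v := (sand_right _ _ _).symm
      _ = hopfSandwich ℂ A V V ((a ⊗ₜ[ℂ] (1:A)) * T') M v := by rw [h3]
      _ = a • X v := sand_left _ _ _
  have : Nontrivial V := IsSimpleModule.nontrivial A V
  obtain ⟨c, hc⟩ := Module.End.exists_eigenvalue (X : Module.End ℂ V)
  obtain ⟨v, hv⟩ := hc.exists_hasEigenvector
  let W : Submodule A V :=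
  { carrier := {w | X w = c • w}
    add_mem' := by
      intro x y hx hy
      simp only [Set.mem_setOf_eq, map_add] at *
      rw [hx, hy, smul_add]
    zero_mem' := by simp
    smul_mem' := by
      intro a w hw
      simp only [Set.mem_setOf_eq] at *
      rw [hequiv, hw, lsmulA_smul_comm] }
  have hvW : v ∈ W := hv.apply_eq_smul
  have hWtop : W = ⊤ := by
    rcases eq_bot_or_eq_top W with h | h
    · exact absurd (h ▸ hvW) (by simpa using hv.2)
    · exact h
  have hXw : ∀ w : V, X w = c • w := fun w => by
    have : w ∈ W := hWtop ▸ Submodule.mem_top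
    exact this
  have hX : X = c • (LinearMap.id : V →ₗ[ℂ] V) := by
    ext w; simpa using hXw w
  have hn : (Module.finrank ℂ V : ℂ) ≠ 0 := by
    have h := Module.finrank_pos (R := ℂ) (M := V)
    exact_mod_cast h.ne'
  have htr : LinearMap.trace ℂ V X = c * (Module.finrank ℂ V : ℂ) := by
    rw [hX, map_smul, LinearMap.trace_id, smul_eq_mul]
  rw [htr, mul_div_cancel_right₀ _ hn]
  exact hX
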